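/- For each fixed γ₀ ≥ 1/8, the function f(t) := γ₀√(1+t²) - artanh(√(1+t²)/(1+t)) is strictly monotonically increasing on (0,∞), tends to -∞ as t → 0⁺ and to +∞ as t → +∞, and hence has a unique zero in (0,∞). -/

import Mathlib

noncomputable def artanh (x : ℝ) : ℝ := 1 / 2 * Real.log ((1 + x) / (1 - x))

/-!
For `t > 0` put `s = √(1 + t²)`. Since `(1 + t + s) (1 + t - s) = 2t`, we get
`artanh (s / (1 + t)) = log (1 + t + s) - log (2t) / 2`, an expression that is easy to
differentiate: `f'(t) = (2γ₀t² - t + 1) / (2ts)`, whose numerator is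
`2 (γ₀ - 1/8) t² + (t - 2)² / 4`, so it vanishes at most at `t = 2` and `f` is strictly
increasing. The term `log (2t) / 2` sends `f` to `-∞` at `0⁺`, while at `+∞` the linear term
`γ₀ s ≥ γ₀ t` beats the logarithms. The intermediate value theorem gives a zero, unique by
monotonicity.
-/

open Set Filter Topology

noncomputable def f (γ₀ t : ℝ) : ℝ :=
  γ₀ * √(1 + t ^ 2) - artanh (√(1 + t ^ 2) / (1 + t))

theorem artanh_sqrt_one_add_sq_div {t : ℝ} (ht : 0 < t) :
    artanh (√(1 + t ^ 2) / (1 + t)) =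
      Real.log (1 + t + √(1 + t ^ 2)) - Real.log (2 * t) / 2 := by
  set s := √(1 + t ^ 2)
  have hs : 0 < s := Real.sqrt_pos.2 (by positivity)
  have hsq : s ^ 2 = 1 + t ^ 2 := Real.sq_sqrt (by positivity)
  have hratio : (1 + s / (1 + t)) / (1 - s / (1 + t)) = (1 + t + s) ^ 2 / (2 * t) := by
    have hlt : s / (1 + t) < 1 := (div_lt_one (by positivity)).2 (by nlinarith)
    rw [div_eq_div_iff (by linarith) (by positivity)]
    field_simp
    linear_combination hsq
  rw [artanh, hratio, Real.log_div (by positivity) (by positivity), Real.log_pow]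
  ring

theorem f_eq_of_pos (γ₀ : ℝ) {t : ℝ} (ht : 0 < t) :
    f γ₀ t =
      γ₀ * √(1 + t ^ 2) - Real.log (1 + t + √(1 + t ^ 2)) + Real.log (2 * t) / 2 := by
  rw [f, artanh_sqrt_one_add_sq_div ht]
  ring

theorem hasDerivAt_f (γ₀ : ℝ) {t : ℝ} (ht : 0 < t) :
    HasDerivAt (f γ₀) ((2 * γ₀ * t ^ 2 - t + 1) / (2 * t * √(1 + t ^ 2))) t := by
  have hq : 0 < 1 + t ^ 2 := by positivity
  have hs : 0 < √(1 + t ^ 2) := Real.sqrt_pos.2 hq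
  have hsqrt := ((hasDerivAt_pow 2 t).const_add 1).sqrt hq.ne'
  have hclosed := ((hsqrt.const_mul γ₀).sub
    ((((hasDerivAt_id t).const_add 1).add hsqrt).log
      (by simp only [Pi.add_apply, id]; positivity))).add
    ((((hasDerivAt_id t).const_mul 2).log (by simp only [id]; positivity)).div_const 2)
  refine (hclosed.congr_of_eventuallyEq ?_).congr_deriv ?_
  · filter_upwards [Ioi_mem_nhds ht] with x hx using f_eq_of_pos γ₀ hx
  · have hsq : √(1 + t ^ 2) ^ 2 = 1 + t ^ 2 := Real.sq_sqrt hq.le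
    simp only [Pi.add_apply, id]
    field_simp
    linear_combination hsq

theorem continuousOn_f (γ₀ : ℝ) : ContinuousOn (f γ₀) (Ioi 0) :=
  fun _ ht ↦ (hasDerivAt_f γ₀ ht).continuousAt.continuousWithinAt

theorem strictMonoOn_Ioi_of_hasDerivAt_pos_of_ne {g g' : ℝ → ℝ} {a c : ℝ} (hac : a < c)
    (hg : ∀ x ∈ Ioi a, HasDerivAt g (g' x) x) (hg' : ∀ x ∈ Ioi a, x ≠ c → 0 < g' x) :
    StrictMonoOn g (Ioi a) := by
  have hcont : ContinuousOn g (Ioi a) := fun x hx ↦ (hg x hx).continuousAt.continuousWithinAt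
  rw [← Ioc_union_Ici_eq_Ioi hac]
  refine StrictMonoOn.union ?_ ?_ (isGreatest_Ioc hac) isLeast_Ici
  · refine strictMonoOn_of_hasDerivWithinAt_pos (f' := g') (convex_Ioc a c)
      (hcont.mono Ioc_subset_Ioi_self) (fun x hx ↦ ?_) (fun x hx ↦ ?_) <;>
      rw [interior_Ioc] at hx
    · exact (hg x hx.1).hasDerivWithinAt
    · exact hg' x hx.1 hx.2.ne
  · refine strictMonoOn_of_hasDerivWithinAt_pos (f' := g') (convex_Ici c)
      (hcont.mono (Ici_subset_Ioi.2 hac)) (fun x hx ↦ ?_) (fun x hx ↦ ?_) <;>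
      rw [interior_Ici] at hx
    · exact (hg x (hac.trans hx)).hasDerivWithinAt
    · exact hg' x (hac.trans hx) hx.ne'

theorem strictMonoOn_f {γ₀ : ℝ} (hγ : 1 / 8 ≤ γ₀) : StrictMonoOn (f γ₀) (Ioi 0) := by
  refine strictMonoOn_Ioi_of_hasDerivAt_pos_of_ne two_pos (fun t ht ↦ hasDerivAt_f γ₀ ht)
    fun t (ht : 0 < t) ht2 ↦ div_pos ?_ (by positivity)
  have : 0 < (t - 2) ^ 2 := by positivity [sub_ne_zero.2 ht2]
  nlinarith [mul_nonneg (sub_nonneg.2 hγ) (sq_nonneg t)]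

theorem tendsto_f_nhdsGT_zero (γ₀ : ℝ) : Tendsto (f γ₀) (𝓝[>] 0) atBot := by
  have hclosed : f γ₀ =ᶠ[𝓝[>] 0] fun t ↦
      (γ₀ * √(1 + t ^ 2) - Real.log (1 + t + √(1 + t ^ 2))) + Real.log (2 * t) / 2 :=
    eventually_nhdsWithin_of_forall fun t ht ↦ f_eq_of_pos γ₀ ht
  have hbounded : Tendsto (fun t : ℝ ↦ γ₀ * √(1 + t ^ 2) - Real.log (1 + t + √(1 + t ^ 2)))
      (𝓝[>] 0) (𝓝 (γ₀ * √(1 + 0 ^ 2) - Real.log (1 + 0 + √(1 + 0 ^ 2)))) :=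
    (ContinuousAt.tendsto (by fun_prop (disch := simp))).mono_left nhdsWithin_le_nhds
  have hdouble : Tendsto (fun t : ℝ ↦ 2 * t) (𝓝[>] 0) (𝓝[>] 0) :=
    tendsto_comap.mono_left (comap_mulLeft_nhdsGT_zero two_pos).ge
  exact (hbounded.add_atBot
    ((Real.tendsto_log_nhdsGT_zero.comp hdouble).atBot_div_const two_pos)).congr' hclosed.symm

theorem tendsto_mul_sub_log_atTop {a : ℝ} (ha : 0 < a) :
    Tendsto (fun t ↦ a * t - Real.log t) atTop atTop := by
  have hlog : Real.log =o[atTop] fun t ↦ a * t :=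
    Real.isLittleO_log_id_atTop.const_mul_right ha.ne'
  exact (Asymptotics.IsEquivalent.refl.sub_isLittleO hlog).symm.tendsto_atTop
    (tendsto_id.const_mul_atTop ha)

theorem tendsto_f_atTop {γ₀ : ℝ} (hγ : 0 < γ₀) : Tendsto (f γ₀) atTop atTop := by
  refine tendsto_atTop_mono' _ ?_
    (tendsto_atTop_add_const_right _ (-Real.log 4) (tendsto_mul_sub_log_atTop hγ))
  filter_upwards [eventually_ge_atTop 1] with t ht
  have hs : t ≤ √(1 + t ^ 2) := Real.le_sqrt_of_sq_le (by linarith)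
  have hs' : √(1 + t ^ 2) ≤ 1 + t := Real.sqrt_le_iff.2 ⟨by linarith, by nlinarith⟩
  have hlog : Real.log (1 + t + √(1 + t ^ 2)) ≤ Real.log 4 + Real.log t := by
    rw [← Real.log_mul (by norm_num) (by positivity)]
    exact Real.log_le_log (by positivity) (by linarith)
  have hlog2 : 0 ≤ Real.log (2 * t) := Real.log_nonneg (by linarith)
  rw [f_eq_of_pos γ₀ (by linarith)]
  nlinarith

theorem f_strict_mono_unique_zero (γ₀ : ℝ) (hγ : 1 / 8 ≤ γ₀) :
    StrictMonoOn (fun t : ℝ => γ₀ * Real.sqrt (1 + t ^ 2) -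
        artanh (Real.sqrt (1 + t ^ 2) / (1 + t))) (Set.Ioi 0) ∧
    Filter.Tendsto (fun t : ℝ => γ₀ * Real.sqrt (1 + t ^ 2) -
        artanh (Real.sqrt (1 + t ^ 2) / (1 + t)))
      (nhdsWithin 0 (Set.Ioi 0)) Filter.atBot ∧
    Filter.Tendsto (fun t : ℝ => γ₀ * Real.sqrt (1 + t ^ 2) -
        artanh (Real.sqrt (1 + t ^ 2) / (1 + t))) Filter.atTop Filter.atTop ∧
    ∃! t : ℝ, t ∈ Set.Ioi (0 : ℝ) ∧
      γ₀ * Real.sqrt (1 + t ^ 2) - artanh (Real.sqrt (1 + t ^ 2) / (1 + t)) = 0 := by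
  have hmono := strictMonoOn_f hγ
  have hbot := tendsto_f_nhdsGT_zero γ₀
  have htop := tendsto_f_atTop (by linarith : 0 < γ₀)
  refine ⟨hmono, hbot, htop, ?_⟩
  obtain ⟨t, ht, hzero⟩ := isPreconnected_Ioi.intermediate_value_Iii
    (le_principal_iff.2 self_mem_nhdsWithin) (le_principal_iff.2 (Ioi_mem_atTop 0))
    (continuousOn_f γ₀) hbot htop (mem_univ 0)
  exact ⟨t, ⟨ht, hzero⟩, fun u ⟨hu, hu0⟩ ↦ hmono.injOn hu ht (hu0.trans hzero.symm)⟩
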